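/- arXiv:1405.6527 — 3 statements merged into one kernel-verified Lean document; each statement's English description precedes it below -/
import Mathlib

section
/- Let H be a finite simple graph that admits a proper colouring with t colours such that every vertex of H is adjacent to vertices of at most r distinct colours other than its own (r ≥ 0). Then the chromatic number of H is at most ⌊t·r/(r+1)⌋ + 1. -/
namespace Stmt0Aux

/-- `x` is a "special" colour: a positive multiple of `m` that is at most `d*m`. -/
def spec (m d x : ℕ) : Prop := x % m = 0 ∧ 0 < x ∧ x / m ≤ d

instance (m d x : ℕ) : Decidable (spec m d x) := by unfold spec; infer_instance

/-- candidate replacement colours for a special colour `b`, avoiding palette `P` -/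
def cand (r : ℕ) (P : Finset ℕ) (b : ℕ) : Finset ℕ :=
  (Finset.Ico (b - r) b).filter (fun x => x ∉ P)

/-- the recolouring -/
def newC (r d : ℕ) (P : Finset ℕ) (b : ℕ) : ℕ :=
  if spec (r+1) d b then
    if h : (cand r P b).Nonempty then (cand r P b).min' h else 0
  else b

lemma spec_le {m d x : ℕ} (h : spec m d x) : m ≤ x :=
  Nat.le_of_dvd h.2.1 (Nat.dvd_of_mod_eq_zero h.1)

lemma not_spec_interior {r d b x : ℕ} (hb : spec (r+1) d b)
    (h1 : b - r ≤ x) (h2 : x < b) : ¬ spec (r+1) d x := by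
  intro hx
  have hdb := Nat.dvd_of_mod_eq_zero hb.1
  have hdx := Nat.dvd_of_mod_eq_zero hx.1
  have hmb := spec_le hb
  have hdvd : (r+1) ∣ (b - x) := Nat.dvd_sub hdb hdx
  have h3 : 0 < b - x := by omega
  have := Nat.le_of_dvd h3 hdvd
  omega

lemma newC_eq_nonspec {r d b : ℕ} (P : Finset ℕ) (hb : ¬ spec (r+1) d b) :
    newC r d P b = b := by
  unfold newC; rw [if_neg hb]

lemma newC_unforced {r d b : ℕ} {P : Finset ℕ} (hb : spec (r+1) d b)
    (h : (cand r P b).Nonempty) :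
    newC r d P b ∉ P ∧ b - r ≤ newC r d P b ∧ newC r d P b < b := by
  have hm := Finset.min'_mem _ h
  simp only [cand, Finset.mem_filter, Finset.mem_Ico] at hm
  unfold newC
  rw [if_pos hb, dif_pos h]
  exact ⟨hm.2, hm.1.1, hm.1.2⟩

lemma newC_eq_zero {r d b : ℕ} (P : Finset ℕ) (hb : spec (r+1) d b)
    (h : ¬ (cand r P b).Nonempty) : newC r d P b = 0 := by
  unfold newC; rw [if_pos hb, dif_neg h]

lemma forced_pal {r d b : ℕ} {P : Finset ℕ} (hb : spec (r+1) d b)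
    (h : ¬ (cand r P b).Nonempty) (hP : P.card ≤ r) :
    P = Finset.Ico (b - r) b := by
  have hsub : Finset.Ico (b - r) b ⊆ P := by
    intro x hx
    by_contra hxP
    exact h ⟨x, Finset.mem_filter.2 ⟨hx, hxP⟩⟩
  have hmb := spec_le hb
  have hcard : (Finset.Ico (b - r) b).card = r := by
    rw [Nat.card_Ico]; omega
  exact (Finset.eq_of_subset_of_card_le hsub (by omega)).symm

lemma newC_not_spec (r d : ℕ) (P : Finset ℕ) (b : ℕ) :
    ¬ spec (r+1) d (newC r d P b) := by
  by_cases hb : spec (r+1) d b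
  · by_cases h : (cand r P b).Nonempty
    · have h' := newC_unforced hb h
      exact not_spec_interior hb h'.2.1 h'.2.2
    · rw [newC_eq_zero P hb h]
      rintro ⟨_, h0, _⟩; omega
  · rw [newC_eq_nonspec P hb]; exact hb

lemma newC_le (r d : ℕ) (P : Finset ℕ) (b : ℕ) : newC r d P b ≤ b := by
  by_cases hb : spec (r+1) d b
  · by_cases h : (cand r P b).Nonempty
    · exact le_of_lt (newC_unforced hb h).2.2
    · rw [newC_eq_zero P hb h]; exact Nat.zero_le b
  · rw [newC_eq_nonspec P hb]

/-- both special and unforced, with `a < b` -/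
lemma newC_lt {r d a b : ℕ} {Pu Pv : Finset ℕ} (sa : spec (r+1) d a) (sb : spec (r+1) d b)
    (fu : (cand r Pu a).Nonempty) (fv : (cand r Pv b).Nonempty) (hlt : a < b) :
    newC r d Pu a < newC r d Pv b := by
  have h1 := newC_unforced sa fu
  have h2 := newC_unforced sb fv
  have hda := Nat.dvd_of_mod_eq_zero sa.1
  have hdb := Nat.dvd_of_mod_eq_zero sb.1
  have hdvd : (r+1) ∣ (b - a) := Nat.dvd_sub hdb hda
  have := Nat.le_of_dvd (by omega) hdvd
  omega

/-- the case where `b` is not special (so the second vertex keeps colour `b`) -/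
lemma newC_ne_nonspec {r d a b : ℕ} {Pu Pv : Finset ℕ} (sa : spec (r+1) d a)
    (sb : ¬ spec (r+1) d b) (hbu : b ∈ Pu) (hu : Pu.card ≤ r) :
    newC r d Pu a ≠ newC r d Pv b := by
  rw [newC_eq_nonspec Pv sb]
  by_cases fu : (cand r Pu a).Nonempty
  · have h := newC_unforced sa fu
    exact fun hEq => h.1 (hEq ▸ hbu)
  · rw [newC_eq_zero Pu sa fu]
    have hPu := forced_pal sa fu hu
    have hma := spec_le sa
    rw [hPu, Finset.mem_Ico] at hbu
    omega

/-- main lemma: adjacent vertices get distinct new colours -/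
lemma newC_ne {r d a b : ℕ} {Pu Pv : Finset ℕ}
    (hab : a ≠ b) (hav : a ∈ Pv) (hbu : b ∈ Pu)
    (hu : Pu.card ≤ r) (hv : Pv.card ≤ r) :
    newC r d Pu a ≠ newC r d Pv b := by
  by_cases sa : spec (r+1) d a
  · by_cases sb : spec (r+1) d b
    · by_cases fu : (cand r Pu a).Nonempty
      · by_cases fv : (cand r Pv b).Nonempty
        · rcases lt_or_gt_of_ne hab with h | h
          · exact ne_of_lt (newC_lt sa sb fu fv h)
          · exact (ne_of_lt (newC_lt sb sa fv fu h)).symm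
        · exfalso
          have hPv := forced_pal sb fv hv
          rw [hPv, Finset.mem_Ico] at hav
          exact not_spec_interior sb hav.1 hav.2 sa
      · exfalso
        have hPu := forced_pal sa fu hu
        rw [hPu, Finset.mem_Ico] at hbu
        exact not_spec_interior sa hbu.1 hbu.2 sb
    · exact newC_ne_nonspec sa sb hbu hu
  · by_cases sb : spec (r+1) d b
    · exact (newC_ne_nonspec sb sa hav hv).symm
    · rw [newC_eq_nonspec Pu sa, newC_eq_nonspec Pv sb]; exact hab

/-- counting the non-special colours below `t` -/
lemma card_nonspec (t r : ℕ) :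
    ((Finset.range t).filter (fun x => ¬ spec (r+1) ((t-1)/(r+1)) x)).card
      = t - (t-1)/(r+1) := by
  set d := (t-1)/(r+1) with hd
  have hdle : d ≤ t := by
    rw [hd]
    rcases Nat.eq_zero_or_pos t with rfl | ht
    · simp
    · exact le_trans (Nat.div_le_self _ _) (by omega)
  clear_value d
  have himg : (Finset.range t).filter (fun x => spec (r+1) d x)
      = (Finset.Icc 1 d).image (fun j => j * (r+1)) := by
    ext x
    simp only [Finset.mem_filter, Finset.mem_range, Finset.mem_image, Finset.mem_Icc]
    constructor
    · rintro ⟨hxt, hmod, hpos, hdiv⟩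
      refine ⟨x / (r+1), ⟨?_, hdiv⟩, ?_⟩
      · have : r + 1 ≤ x := Nat.le_of_dvd hpos (Nat.dvd_of_mod_eq_zero hmod)
        exact (Nat.one_le_div_iff (by omega)).2 this
      · exact Nat.div_mul_cancel (Nat.dvd_of_mod_eq_zero hmod)
    · rintro ⟨j, ⟨hj1, hjd⟩, rfl⟩
      have h1 : 1 ≤ j * (r+1) := Nat.one_le_iff_ne_zero.2 (by positivity)
      have h2 : j * (r+1) ≤ d * (r+1) := Nat.mul_le_mul_right _ hjd
      have h3 : d * (r+1) ≤ t - 1 := by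
        rw [hd]; exact Nat.div_mul_le_self _ _
      refine ⟨by omega, Nat.mul_mod_left j (r+1), by omega, ?_⟩
      rw [Nat.mul_div_cancel j (by omega : 0 < r+1)]
      exact hjd
  have hinj : Function.Injective (fun j : ℕ => j * (r+1)) := fun x y h => by
    simpa using Nat.eq_of_mul_eq_mul_right (by omega : 0 < r+1) h
  have hcard : ((Finset.range t).filter (fun x => spec (r+1) d x)).card = d := by
    rw [himg, Finset.card_image_of_injective _ hinj, Nat.card_Icc]
    omega
  have hsum := Finset.card_filter_add_card_filter_not
    (s := Finset.range t) (p := fun x => spec (r+1) d x)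
  rw [Finset.card_range] at hsum
  omega

lemma key_arith (t r : ℕ) : t - (t-1)/(r+1) ≤ t * r / (r + 1) + 1 := by
  rcases Nat.eq_zero_or_pos t with rfl | ht
  · simp
  set q := (t-1)/(r+1) with hq
  set s := (t-1) % (r+1) with hs
  have hslt : s < r + 1 := Nat.mod_lt _ (by omega)
  have h1 : t - 1 + 1 = t := Nat.sub_add_cancel ht
  clear_value q s
  have ht' : t = (r+1) * q + s + 1 := by
    rw [← h1]
    congr 1
    rw [hq, hs, Nat.div_add_mod]
  have h2 : q * r + s ≤ t * r / (r+1) := by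
    rw [Nat.le_div_iff_mul_le (by omega : 0 < r + 1)]
    rw [ht']
    nlinarith [hslt]
  have h3 : t - q = q * r + s + 1 := by
    have hteq : t = q * r + s + 1 + q := by rw [ht']; ring
    rw [hteq, Nat.add_sub_cancel]
  omega

end Stmt0Aux

open Stmt0Aux in
/-- If a finite simple graph `H` has a proper `t`-colouring in which each
vertex is adjacent to vertices of at most `r` distinct colours, then
`χ(H) ≤ ⌊t·r/(r+1)⌋ + 1`. -/
theorem stmt_0 {V : Type*} [Fintype V] (H : SimpleGraph V) [DecidableRel H.Adj]
    (t r : ℕ) (c : H.Coloring (Fin t))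
    (hr : ∀ v : V, ((H.neighborFinset v).image (fun u => c u)).card ≤ r) :
    H.chromaticNumber ≤ (t * r / (r + 1) + 1 : ℕ) := by
  classical
  set d := (t-1)/(r+1) with hd
  set P : V → Finset ℕ := fun v => (H.neighborFinset v).image (fun u => (c u : ℕ)) with hP
  have hPcard : ∀ v, (P v).card ≤ r := by
    intro v
    have heq : P v = ((H.neighborFinset v).image (fun u => c u)).image (fun x : Fin t => (x : ℕ)) := by
      rw [Finset.image_image]; rfl
    rw [heq]
    exact le_trans Finset.card_image_le (hr v)
  have hlt : ∀ v, newC r d (P v) (c v : ℕ) < t :=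
    fun v => lt_of_le_of_lt (newC_le r d (P v) (c v : ℕ)) (c v).isLt
  let C : H.Coloring {x : Fin t // ¬ spec (r+1) d x.val} :=
    SimpleGraph.Coloring.mk
      (fun v => ⟨⟨newC r d (P v) (c v : ℕ), hlt v⟩, newC_not_spec r d (P v) (c v : ℕ)⟩)
      (by
        intro u v huv hEq
        have h1 : (c u : ℕ) ∈ P v := Finset.mem_image.2 ⟨u, by
          rw [SimpleGraph.mem_neighborFinset]; exact huv.symm, rfl⟩
        have h2 : (c v : ℕ) ∈ P u := Finset.mem_image.2 ⟨v, by
          rw [SimpleGraph.mem_neighborFinset]; exact huv, rfl⟩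
        have hne : (c u : ℕ) ≠ (c v : ℕ) := fun h => (c.valid huv) (Fin.val_injective h)
        exact newC_ne hne h1 h2 (hPcard u) (hPcard v)
          (congrArg (fun x : {x : Fin t // ¬ spec (r+1) d x.val} => x.1.1) hEq))
  have hcol : H.Colorable (Fintype.card {x : Fin t // ¬ spec (r+1) d x.val}) := C.colorable
  have hcard : Fintype.card {x : Fin t // ¬ spec (r+1) d x.val} = t - d := by
    rw [Fintype.card_subtype]
    have himage : (Finset.range t).filter (fun x => ¬ spec (r+1) d x)
        = Finset.image Fin.val (Finset.univ.filter (fun x : Fin t => ¬ spec (r+1) d x.val)) := by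
      ext x
      simp only [Finset.mem_filter, Finset.mem_range, Finset.mem_image, Finset.mem_univ, true_and]
      constructor
      · rintro ⟨hx, hs⟩
        exact ⟨⟨x, hx⟩, hs, rfl⟩
      · rintro ⟨y, hy, rfl⟩
        exact ⟨y.isLt, hy⟩
    have := card_nonspec t r
    rw [himage, Finset.card_image_of_injective _ Fin.val_injective] at this
    rw [← hd] at this
    exact this
  rw [hcard] at hcol
  calc H.chromaticNumber ≤ (t - d : ℕ) := hcol.chromaticNumber_le
    _ ≤ ((t * r / (r + 1) + 1 : ℕ) : ℕ∞) := by
        exact_mod_cast key_arith t r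
end

section
/- Let n, m ≥ 2 and let ℓ ≥ 2 be even. Then the number of non-backtracking walks of length ℓ in K_{n,m}, counted as directed walks, equals nm(n+m−2)·((n−1)(m−1))^{ℓ/2 − 1}. -/
/-- A non-backtracking walk of length `ℓ`, encoded by its vertex sequence. -/
def IsNBWalk {V : Type*} (G : SimpleGraph V) (ℓ : ℕ) (w : Fin (ℓ + 1) → V) : Prop :=
  (∀ i j : Fin (ℓ + 1), (i : ℕ) + 1 = (j : ℕ) → G.Adj (w i) (w j)) ∧
  (∀ i j : Fin (ℓ + 1), (i : ℕ) + 2 = (j : ℕ) → w i ≠ w j)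

namespace NBAux

open Finset

abbrev BG (n m : ℕ) := completeBipartiteGraph (Fin n) (Fin m)

abbrev NBL (n m ℓ : ℕ) :=
  {w : Fin (ℓ+1) → Fin n ⊕ Fin m // IsNBWalk (BG n m) ℓ w ∧ (w (Fin.last ℓ)).isLeft}

abbrev NBR (n m ℓ : ℕ) :=
  {w : Fin (ℓ+1) → Fin n ⊕ Fin m // IsNBWalk (BG n m) ℓ w ∧ (w (Fin.last ℓ)).isRight}

variable {n m ℓ : ℕ}

lemma adj_of {w : Fin (ℓ+1) → Fin n ⊕ Fin m} (hw : IsNBWalk (BG n m) ℓ w)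
    (i : ℕ) (h : i + 1 ≤ ℓ) :
    (BG n m).Adj (w ⟨i, by omega⟩) (w ⟨i+1, by omega⟩) :=
  hw.1 ⟨i, by omega⟩ ⟨i+1, by omega⟩ rfl

lemma ne_of {w : Fin (ℓ+1) → Fin n ⊕ Fin m} (hw : IsNBWalk (BG n m) ℓ w)
    (i : ℕ) (h : i + 2 ≤ ℓ) :
    w ⟨i, by omega⟩ ≠ w ⟨i+2, by omega⟩ :=
  hw.2 ⟨i, by omega⟩ ⟨i+2, by omega⟩ rfl

lemma init_isNBWalk {w : Fin (ℓ+2) → Fin n ⊕ Fin m} (hw : IsNBWalk (BG n m) (ℓ+1) w) :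
    IsNBWalk (BG n m) ℓ (Fin.init w) := by
  constructor
  · intro i j hij
    exact hw.1 i.castSucc j.castSucc (by simpa using hij)
  · intro i j hij
    exact hw.2 i.castSucc j.castSucc (by simpa using hij)

lemma snoc_isNBWalk (hℓ : 1 ≤ ℓ) {w : Fin (ℓ+1) → Fin n ⊕ Fin m}
    (hw : IsNBWalk (BG n m) ℓ w) {x : Fin n ⊕ Fin m}
    (hadj : (BG n m).Adj (w (Fin.last ℓ)) x)
    (hne : w ⟨ℓ-1, by omega⟩ ≠ x) :
    IsNBWalk (BG n m) (ℓ+1) (Fin.snoc w x) := by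
  have hcast : ∀ (k : Fin (ℓ+2)) (h : (k : ℕ) < ℓ+1),
      (Fin.snoc w x : Fin (ℓ+2) → Fin n ⊕ Fin m) k = w ⟨k, h⟩ := by
    intro k h
    simp only [Fin.snoc, h, dif_pos, cast_eq]
    rfl
  have hlast : ∀ (k : Fin (ℓ+2)), (k : ℕ) = ℓ+1 →
      (Fin.snoc w x : Fin (ℓ+2) → Fin n ⊕ Fin m) k = x := by
    intro k h
    simp [Fin.snoc, show ¬((k : ℕ) < ℓ+1) by omega]
  constructor
  · intro i j hij
    by_cases hj : (j : ℕ) < ℓ+1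
    · rw [hcast i (by omega), hcast j hj]
      exact hw.1 ⟨i, by omega⟩ ⟨j, hj⟩ hij
    · have hj' : (j : ℕ) = ℓ+1 := by omega
      rw [hlast j hj', hcast i (by omega)]
      have : (⟨(i : ℕ), by omega⟩ : Fin (ℓ+1)) = Fin.last ℓ := Fin.ext (by simp <;> omega)
      rw [this]
      exact hadj
  · intro i j hij
    by_cases hj : (j : ℕ) < ℓ+1
    · rw [hcast i (by omega), hcast j hj]
      exact hw.2 ⟨i, by omega⟩ ⟨j, hj⟩ hij
    · have hj' : (j : ℕ) = ℓ+1 := by omega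
      rw [hlast j hj', hcast i (by omega)]
      have : (⟨(i : ℕ), by omega⟩ : Fin (ℓ+1)) = ⟨ℓ-1, by omega⟩ := Fin.ext (by simp <;> omega)
      rw [this]
      exact hne

lemma card_ne_right (b : Fin m) :
    Nat.card {x : Fin m // (Sum.inr b : Fin n ⊕ Fin m) ≠ Sum.inr x} = m - 1 := by
  have e : {x : Fin m // (Sum.inr b : Fin n ⊕ Fin m) ≠ Sum.inr x} ≃ {x : Fin m // ¬ (x = b)} :=
    Equiv.subtypeEquivRight (by simp [eq_comm])
  rw [Nat.card_congr e, Nat.card_eq_fintype_card, Fintype.card_subtype_compl,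
    Fintype.card_subtype_eq, Fintype.card_fin]

lemma card_ne_left (a : Fin n) :
    Nat.card {x : Fin n // (Sum.inl a : Fin n ⊕ Fin m) ≠ Sum.inl x} = n - 1 := by
  have e : {x : Fin n // (Sum.inl a : Fin n ⊕ Fin m) ≠ Sum.inl x} ≃ {x : Fin n // ¬ (x = a)} :=
    Equiv.subtypeEquivRight (by simp [eq_comm])
  rw [Nat.card_congr e, Nat.card_eq_fintype_card, Fintype.card_subtype_compl,
    Fintype.card_subtype_eq, Fintype.card_fin]

lemma nat_card_sigma {ι : Type*} [Fintype ι] (f : ι → Type*) [∀ i, Fintype (f i)] :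
    Nat.card (Σ i, f i) = ∑ i : ι, Nat.card (f i) := by
  simp [Nat.card_eq_fintype_card]

lemma bg_adj (u v : Fin n ⊕ Fin m) :
    (BG n m).Adj u v ↔ (u.isLeft ∧ v.isRight ∨ u.isRight ∧ v.isLeft) := Iff.rfl

def eL (n m : ℕ) : Fin n × Fin m → NBL n m 1 := fun p =>
  ⟨![Sum.inr p.2, Sum.inl p.1], by
    constructor
    · intro i j hij
      fin_cases i <;> fin_cases j <;> simp_all [completeBipartiteGraph]
    · intro i j hij
      have := i.is_lt
      have := j.is_lt
      omega, by rfl⟩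

def eR (n m : ℕ) : Fin n × Fin m → NBR n m 1 := fun p =>
  ⟨![Sum.inl p.1, Sum.inr p.2], by
    constructor
    · intro i j hij
      fin_cases i <;> fin_cases j <;> simp_all [completeBipartiteGraph]
    · intro i j hij
      have := i.is_lt
      have := j.is_lt
      omega, by rfl⟩

lemma card_NBL_one : Nat.card (NBL n m 1) = n * m := by
  have hbij : Function.Bijective (eL n m) := by
    constructor
    · rintro ⟨a1, b1⟩ ⟨a2, b2⟩ h
      have h0 := congrFun (Subtype.ext_iff.mp h) 0
      have h1 := congrFun (Subtype.ext_iff.mp h) 1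
      simp [eL] at h0 h1
      simp [h0, h1]
    · rintro ⟨w, hw, hleft⟩
      obtain ⟨a, ha⟩ := Sum.isLeft_iff.mp hleft
      have hadj := adj_of hw 0 (by omega)
      rw [show (⟨1, by omega⟩ : Fin 2) = Fin.last 1 from rfl, ha] at hadj
      have hr : (w ⟨0, by omega⟩).isRight := by
        rcases (bg_adj _ _).mp hadj with ⟨_, h⟩ | ⟨h, _⟩ <;> simp_all
      obtain ⟨b, hb⟩ := Sum.isRight_iff.mp hr
      refine ⟨⟨a, b⟩, Subtype.ext ?_⟩
      funext i
      fin_cases i <;> simp [eL]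
      · exact hb.symm
      · exact ha.symm
  rw [← Nat.card_eq_of_bijective _ hbij, Nat.card_prod, Nat.card_eq_fintype_card,
    Nat.card_eq_fintype_card, Fintype.card_fin, Fintype.card_fin]

lemma card_NBR_one : Nat.card (NBR n m 1) = n * m := by
  have hbij : Function.Bijective (eR n m) := by
    constructor
    · rintro ⟨a1, b1⟩ ⟨a2, b2⟩ h
      have h0 := congrFun (Subtype.ext_iff.mp h) 0
      have h1 := congrFun (Subtype.ext_iff.mp h) 1
      simp [eR] at h0 h1
      simp [h0, h1]
    · rintro ⟨w, hw, hright⟩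
      obtain ⟨b, hb⟩ := Sum.isRight_iff.mp hright
      have hadj := adj_of hw 0 (by omega)
      rw [show (⟨1, by omega⟩ : Fin 2) = Fin.last 1 from rfl, hb] at hadj
      have hl : (w ⟨0, by omega⟩).isLeft := by
        rcases (bg_adj _ _).mp hadj with ⟨h, _⟩ | ⟨_, h⟩ <;> simp_all
      obtain ⟨a, ha⟩ := Sum.isLeft_iff.mp hl
      refine ⟨⟨a, b⟩, Subtype.ext ?_⟩
      funext i
      fin_cases i <;> simp [eR]
      · exact ha.symm
      · exact hb.symm
  rw [← Nat.card_eq_of_bijective _ hbij, Nat.card_prod, Nat.card_eq_fintype_card,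
    Nat.card_eq_fintype_card, Fintype.card_fin, Fintype.card_fin]

def stepR (n m ℓ : ℕ) (hℓ : 1 ≤ ℓ)
    (p : Σ w' : NBL n m ℓ, {x : Fin m // w'.1 ⟨ℓ-1, by omega⟩ ≠ Sum.inr x}) :
    NBR n m (ℓ+1) :=
  ⟨Fin.snoc p.1.1 (Sum.inr p.2.1), by
    refine ⟨snoc_isNBWalk hℓ p.1.2.1 ?_ p.2.2, ?_⟩
    · exact (bg_adj _ _).mpr (Or.inl ⟨p.1.2.2, rfl⟩)
    · rw [Fin.snoc_last]
      rfl⟩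

def stepL (n m ℓ : ℕ) (hℓ : 1 ≤ ℓ)
    (p : Σ w' : NBR n m ℓ, {x : Fin n // w'.1 ⟨ℓ-1, by omega⟩ ≠ Sum.inl x}) :
    NBL n m (ℓ+1) :=
  ⟨Fin.snoc p.1.1 (Sum.inl p.2.1), by
    refine ⟨snoc_isNBWalk hℓ p.1.2.1 ?_ p.2.2, ?_⟩
    · exact (bg_adj _ _).mpr (Or.inr ⟨p.1.2.2, rfl⟩)
    · rw [Fin.snoc_last]
      rfl⟩

lemma stepR_bijective (hℓ : 1 ≤ ℓ) : Function.Bijective (stepR n m ℓ hℓ) := by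
  constructor
  · rintro ⟨⟨w1, hw1⟩, x1, hx1⟩ ⟨⟨w2, hw2⟩, x2, hx2⟩ h
    have h' : (Fin.snoc w1 (Sum.inr x1) : Fin (ℓ+2) → Fin n ⊕ Fin m) =
        Fin.snoc w2 (Sum.inr x2) := congrArg Subtype.val h
    have hw : w1 = w2 := by
      have := congrArg Fin.init h'
      rwa [Fin.init_snoc, Fin.init_snoc] at this
    subst hw
    have hx : x1 = x2 := by
      have := congrFun h' (Fin.last (ℓ+1))
      rw [Fin.snoc_last, Fin.snoc_last] at this
      exact Sum.inr_injective this
    subst hx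
    rfl
  · rintro ⟨w, hw, hright⟩
    obtain ⟨x, hx⟩ := Sum.isRight_iff.mp hright
    have hw' := init_isNBWalk hw
    have hadj := adj_of hw ℓ (by omega)
    rw [show (⟨ℓ+1, by omega⟩ : Fin (ℓ+2)) = Fin.last (ℓ+1) from Fin.ext rfl, hx] at hadj
    have hleft : (w ⟨ℓ, by omega⟩).isLeft := by
      rcases (bg_adj _ _).mp hadj with ⟨h, _⟩ | ⟨_, h⟩ <;> simp_all
    have hleft' : (Fin.init w (Fin.last ℓ)).isLeft := by
      show (w (Fin.castSucc (Fin.last ℓ))).isLeft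
      rwa [show Fin.castSucc (Fin.last ℓ) = (⟨ℓ, by omega⟩ : Fin (ℓ+2)) from Fin.ext rfl]
    have hne : Fin.init w ⟨ℓ-1, by omega⟩ ≠ Sum.inr x := by
      have h2 := ne_of hw (ℓ-1) (by omega)
      rw [show (⟨ℓ-1+2, by omega⟩ : Fin (ℓ+2)) = Fin.last (ℓ+1) from Fin.ext (by simp <;> omega),
        hx] at h2
      have h3 : Fin.init w ⟨ℓ-1, by omega⟩ = w ⟨ℓ-1, by omega⟩ := by
        show w (Fin.castSucc _) = _
        congr 1
      rw [h3]
      exact h2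
    refine ⟨⟨⟨Fin.init w, hw', hleft'⟩, ⟨x, hne⟩⟩, Subtype.ext ?_⟩
    show Fin.snoc (Fin.init w) (Sum.inr x) = w
    rw [← hx]
    exact Fin.snoc_init_self w

lemma stepL_bijective (hℓ : 1 ≤ ℓ) : Function.Bijective (stepL n m ℓ hℓ) := by
  constructor
  · rintro ⟨⟨w1, hw1⟩, x1, hx1⟩ ⟨⟨w2, hw2⟩, x2, hx2⟩ h
    have h' : (Fin.snoc w1 (Sum.inl x1) : Fin (ℓ+2) → Fin n ⊕ Fin m) =
        Fin.snoc w2 (Sum.inl x2) := congrArg Subtype.val h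
    have hw : w1 = w2 := by
      have := congrArg Fin.init h'
      rwa [Fin.init_snoc, Fin.init_snoc] at this
    subst hw
    have hx : x1 = x2 := by
      have := congrFun h' (Fin.last (ℓ+1))
      rw [Fin.snoc_last, Fin.snoc_last] at this
      exact Sum.inl_injective this
    subst hx
    rfl
  · rintro ⟨w, hw, hleft⟩
    obtain ⟨x, hx⟩ := Sum.isLeft_iff.mp hleft
    have hw' := init_isNBWalk hw
    have hadj := adj_of hw ℓ (by omega)
    rw [show (⟨ℓ+1, by omega⟩ : Fin (ℓ+2)) = Fin.last (ℓ+1) from Fin.ext rfl, hx] at hadj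
    have hright : (w ⟨ℓ, by omega⟩).isRight := by
      rcases (bg_adj _ _).mp hadj with ⟨h, _⟩ | ⟨_, h⟩ <;> simp_all
    have hright' : (Fin.init w (Fin.last ℓ)).isRight := by
      show (w (Fin.castSucc (Fin.last ℓ))).isRight
      rwa [show Fin.castSucc (Fin.last ℓ) = (⟨ℓ, by omega⟩ : Fin (ℓ+2)) from Fin.ext rfl]
    have hne : Fin.init w ⟨ℓ-1, by omega⟩ ≠ Sum.inl x := by
      have h2 := ne_of hw (ℓ-1) (by omega)
      rw [show (⟨ℓ-1+2, by omega⟩ : Fin (ℓ+2)) = Fin.last (ℓ+1) from Fin.ext (by simp <;> omega),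
        hx] at h2
      have h3 : Fin.init w ⟨ℓ-1, by omega⟩ = w ⟨ℓ-1, by omega⟩ := by
        show w (Fin.castSucc _) = _
        congr 1
      rw [h3]
      exact h2
    refine ⟨⟨⟨Fin.init w, hw', hright'⟩, ⟨x, hne⟩⟩, Subtype.ext ?_⟩
    show Fin.snoc (Fin.init w) (Sum.inl x) = w
    rw [← hx]
    exact Fin.snoc_init_self w

lemma card_NBR_step (hℓ : 1 ≤ ℓ) :
    Nat.card (NBR n m (ℓ+1)) = Nat.card (NBL n m ℓ) * (m - 1) := by
  classical
  rw [← Nat.card_eq_of_bijective _ (stepR_bijective (n := n) (m := m) hℓ), nat_card_sigma]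
  have key : ∀ w' : NBL n m ℓ,
      Nat.card {x : Fin m // w'.1 ⟨ℓ-1, by omega⟩ ≠ Sum.inr x} = m - 1 := by
    rintro ⟨w, hw, hleft⟩
    have hadj := adj_of hw (ℓ-1) (by omega)
    rw [show (⟨ℓ-1+1, by omega⟩ : Fin (ℓ+1)) = Fin.last ℓ from Fin.ext (by simp <;> omega)] at hadj
    have hr : (w ⟨ℓ-1, by omega⟩).isRight := by
      obtain ⟨a, ha⟩ := Sum.isLeft_iff.mp hleft
      rcases (bg_adj _ _).mp hadj with ⟨_, h⟩ | ⟨h, _⟩ <;> simp_all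
    obtain ⟨b, hb⟩ := Sum.isRight_iff.mp hr
    show Nat.card {x : Fin m // w ⟨ℓ-1, by omega⟩ ≠ Sum.inr x} = m - 1
    rw [hb]
    exact card_ne_right b
  simp_rw [key]
  rw [Finset.sum_const, smul_eq_mul, Finset.card_univ, ← Nat.card_eq_fintype_card]

lemma card_NBL_step (hℓ : 1 ≤ ℓ) :
    Nat.card (NBL n m (ℓ+1)) = Nat.card (NBR n m ℓ) * (n - 1) := by
  classical
  rw [← Nat.card_eq_of_bijective _ (stepL_bijective (n := n) (m := m) hℓ), nat_card_sigma]
  have key : ∀ w' : NBR n m ℓ,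
      Nat.card {x : Fin n // w'.1 ⟨ℓ-1, by omega⟩ ≠ Sum.inl x} = n - 1 := by
    rintro ⟨w, hw, hright⟩
    have hadj := adj_of hw (ℓ-1) (by omega)
    rw [show (⟨ℓ-1+1, by omega⟩ : Fin (ℓ+1)) = Fin.last ℓ from Fin.ext (by simp <;> omega)] at hadj
    have hl : (w ⟨ℓ-1, by omega⟩).isLeft := by
      obtain ⟨b, hb⟩ := Sum.isRight_iff.mp hright
      rcases (bg_adj _ _).mp hadj with ⟨h, _⟩ | ⟨_, h⟩ <;> simp_all
    obtain ⟨a, ha⟩ := Sum.isLeft_iff.mp hl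
    show Nat.card {x : Fin n // w ⟨ℓ-1, by omega⟩ ≠ Sum.inl x} = n - 1
    rw [ha]
    exact card_ne_left a
  simp_rw [key]
  rw [Finset.sum_const, smul_eq_mul, Finset.card_univ, ← Nat.card_eq_fintype_card]

lemma not_left_right {α β : Type*} {x : α ⊕ β} (h1 : x.isLeft) (h2 : x.isRight) : False := by
  cases x <;> simp_all

lemma card_total :
    Nat.card {w : Fin (ℓ+1) → Fin n ⊕ Fin m // IsNBWalk (BG n m) ℓ w} =
      Nat.card (NBL n m ℓ) + Nat.card (NBR n m ℓ) := by
  classical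
  rw [← Nat.card_sum]
  apply Nat.card_congr
  apply Equiv.symm
  refine Equiv.ofBijective
    (Sum.elim (fun w => ⟨w.1, w.2.1⟩ : NBL n m ℓ → _)
      (fun w => ⟨w.1, w.2.1⟩ : NBR n m ℓ → _)) ⟨?_, ?_⟩
  · rintro (⟨w1, h1, s1⟩ | ⟨w1, h1, s1⟩) (⟨w2, h2, s2⟩ | ⟨w2, h2, s2⟩) h <;>
      · have hw : w1 = w2 := congrArg Subtype.val h
        subst hw
        first
        | rfl
        | exact (not_left_right s1 s2).elim
        | exact (not_left_right s2 s1).elim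
  · rintro ⟨w, hw⟩
    cases hc : w (Fin.last ℓ) with
    | inl a => exact ⟨Sum.inl ⟨w, hw, by simp [hc]⟩, rfl⟩
    | inr b => exact ⟨Sum.inr ⟨w, hw, by simp [hc]⟩, rfl⟩

lemma cards (n m : ℕ) : ∀ k : ℕ,
    Nat.card (NBL n m (2*k+2)) = n*m*(n-1)*((n-1)*(m-1))^k ∧
    Nat.card (NBR n m (2*k+2)) = n*m*(m-1)*((n-1)*(m-1))^k := by
  intro k
  induction k with
  | zero =>
    constructor
    · show Nat.card (NBL n m (1+1)) = _
      rw [card_NBL_step le_rfl, card_NBR_one]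
      ring
    · show Nat.card (NBR n m (1+1)) = _
      rw [card_NBR_step le_rfl, card_NBL_one]
      ring
  | succ k ih =>
    constructor
    · show Nat.card (NBL n m ((2*k+3)+1)) = _
      rw [card_NBL_step (by omega), show (2*k+3 : ℕ) = (2*k+2)+1 from rfl,
        card_NBR_step (by omega), ih.1]
      ring
    · show Nat.card (NBR n m ((2*k+3)+1)) = _
      rw [card_NBR_step (by omega), show (2*k+3 : ℕ) = (2*k+2)+1 from rfl,
        card_NBL_step (by omega), ih.2]
      ring

end NBAux

/-- For `n, m ≥ 2` and even `ℓ ≥ 2`, the number of directed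
non-backtracking walks of length `ℓ` in `K_{n,m}` is
`nm(n+m−2)((n−1)(m−1))^(ℓ/2−1)`. -/
theorem stmt_5 (n m ℓ : ℕ) (hn : 2 ≤ n) (hm : 2 ≤ m) (hℓ : 2 ≤ ℓ) (heven : Even ℓ) :
    Nat.card {w : Fin (ℓ + 1) → (Fin n ⊕ Fin m) //
        IsNBWalk (completeBipartiteGraph (Fin n) (Fin m)) ℓ w} =
      n * m * (n + m - 2) * ((n - 1) * (m - 1)) ^ (ℓ / 2 - 1) := by
  obtain ⟨r, rfl⟩ := heven
  obtain ⟨k, rfl⟩ : ∃ k, r = k+1 := ⟨r-1, by omega⟩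
  rw [show (k+1)+(k+1) = 2*k+2 from by ring]
  have h := NBAux.cards n m k
  rw [NBAux.card_total, h.1, h.2, show (2*k+2)/2 - 1 = k from by omega]
  obtain ⟨a, rfl⟩ : ∃ a, n = a+2 := ⟨n-2, by omega⟩
  obtain ⟨b, rfl⟩ : ∃ b, m = b+2 := ⟨m-2, by omega⟩
  simp only [show a+2-1 = a+1 from rfl, show b+2-1 = b+1 from rfl,
    show a+2+(b+2)-2 = (a+1)+(b+1) from by omega]
  ring
end

section
/- Let G be a finite simple loopless graph and ℓ ≥ 2. Define the ℓ-link graph L_ℓ(G) as the simple graph whose vertices are the ℓ-links of G (non-backtracking walks of length ℓ identified with their reverses), two ℓ-links being adjacent when they are the initial and terminal length-ℓ subwalks of a common non-backtracking walk of length ℓ+1. Then the map sending each ℓ-link to its middle (ℓ−2)-link (the subwalk from position 1 to position ℓ−1) is a graph homomorphism from L_ℓ(G) to L_{ℓ−2}(G). Consequently χ(L_ℓ(G)) ≤ χ(L_{ℓ−2}(G)). -/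
/-- The reverse of a walk. -/
def revWalk {V : Type*} {ℓ : ℕ} (w : Fin (ℓ + 1) → V) : Fin (ℓ + 1) → V :=
  fun i => w i.rev

/-- An `ℓ`-link of `G`: a non-backtracking walk identified with its reverse, encoded
as the two-element set `{w, revWalk w}`. -/
def Link {V : Type*} (G : SimpleGraph V) (ℓ : ℕ) : Type _ :=
  {S : Set (Fin (ℓ + 1) → V) // ∃ w, IsNBWalk G ℓ w ∧ S = {w, revWalk w}}

/-- Initial length-`ℓ` subwalk of a walk of length `ℓ+1`. -/
def initWalk {V : Type*} {ℓ : ℕ} (q : Fin (ℓ + 2) → V) : Fin (ℓ + 1) → V :=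
  fun i => q i.castSucc

/-- Terminal length-`ℓ` subwalk of a walk of length `ℓ+1`. -/
def tailWalk {V : Type*} {ℓ : ℕ} (q : Fin (ℓ + 2) → V) : Fin (ℓ + 1) → V :=
  fun i => q i.succ

/-- The `ℓ`-link graph of `G`: two `ℓ`-links are adjacent when they are the initial
and terminal length-`ℓ` subwalks of a common non-backtracking walk of length `ℓ+1`. -/
def LinkGraph {V : Type*} (G : SimpleGraph V) (ℓ : ℕ) : SimpleGraph (Link G ℓ) where
  Adj L R := L ≠ R ∧ ∃ q : Fin (ℓ + 2) → V, IsNBWalk G (ℓ + 1) q ∧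
      ((L.1 = {initWalk q, revWalk (initWalk q)} ∧
          R.1 = {tailWalk q, revWalk (tailWalk q)}) ∨
       (R.1 = {initWalk q, revWalk (initWalk q)} ∧
          L.1 = {tailWalk q, revWalk (tailWalk q)}))
  symm := ⟨by
    rintro L R ⟨hne, q, hq, h⟩
    exact ⟨hne.symm, q, hq, h.symm⟩⟩
  loopless := ⟨fun L h => h.1 rfl⟩

/-- The middle subwalk (positions `1` to `ℓ-1`) of a walk of length `ℓ = k+2`. -/
def midWalk {V : Type*} {k : ℕ} (w : Fin (k + 3) → V) : Fin (k + 1) → V :=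
  fun i => w ⟨(i : ℕ) + 1, by omega⟩

lemma midWalk_isNB {V : Type*} {G : SimpleGraph V} {k : ℕ} {w : Fin (k + 3) → V}
    (h : IsNBWalk G (k + 2) w) : IsNBWalk G k (midWalk w) := by
  constructor
  · intro i j hij
    exact h.1 ⟨(i : ℕ) + 1, by omega⟩ ⟨(j : ℕ) + 1, by omega⟩ (by simp; omega)
  · intro i j hij
    exact h.2 ⟨(i : ℕ) + 1, by omega⟩ ⟨(j : ℕ) + 1, by omega⟩ (by simp; omega)

/-- The map sending a `(k+2)`-link to its middle `k`-link. -/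
noncomputable def midLink {V : Type*} (G : SimpleGraph V) (k : ℕ)
    (L : Link G (k + 2)) : Link G k :=
  ⟨{midWalk (Classical.choose L.2), revWalk (midWalk (Classical.choose L.2))},
   ⟨midWalk (Classical.choose L.2),
    midWalk_isNB (Classical.choose_spec L.2).1, rfl⟩⟩

section

variable {V : Type*} {G : SimpleGraph V}

lemma revWalk_revWalk {ℓ : ℕ} (w : Fin (ℓ + 1) → V) : revWalk (revWalk w) = w := by
  funext i
  simp [revWalk]

lemma eq_or_eq_revWalk_of_pair_eq {ℓ : ℕ} {w u : Fin (ℓ + 1) → V}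
    (h : ({w, revWalk w} : Set _) = {u, revWalk u}) : w = u ∨ w = revWalk u := by
  have hw : w ∈ ({u, revWalk u} : Set _) := h ▸ Set.mem_insert w _
  simpa using hw

lemma midWalk_revWalk {k : ℕ} (w : Fin (k + 3) → V) :
    midWalk (revWalk w) = revWalk (midWalk w) := by
  funext i
  simp only [midWalk, revWalk]
  congr 1
  ext
  simp only [Fin.val_rev]
  omega

lemma midWalk_initWalk {k : ℕ} (q : Fin (k + 4) → V) :
    midWalk (initWalk q) = initWalk (midWalk q) := rfl

lemma midWalk_tailWalk {k : ℕ} (q : Fin (k + 4) → V) :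
    midWalk (tailWalk q) = tailWalk (midWalk q) := rfl

lemma initWalk_ne_tailWalk {s : ℕ} {q : Fin (s + 2) → V} (hq : IsNBWalk G (s + 1) q) :
    initWalk q ≠ tailWalk q := fun h =>
  (hq.1 0 1 rfl).ne (congrFun h 0)

lemma initWalk_ne_revWalk_tailWalk {s : ℕ} {q : Fin (s + 2) → V} (hq : IsNBWalk G (s + 1) q) :
    initWalk q ≠ revWalk (tailWalk q) := by
  intro h
  have hpal : ∀ i j : Fin (s + 2), (i : ℕ) < j → (i : ℕ) + j = s + 1 → q i = q j := by
    intro i j hlt hij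
    calc q i = initWalk q ⟨i, by omega⟩ := rfl
      _ = revWalk (tailWalk q) ⟨i, by omega⟩ := congrFun h _
      _ = q j := congrArg q (Fin.ext (by simp only [Fin.val_succ, Fin.val_rev]; omega))
  rcases Nat.even_or_odd s with ⟨m, rfl⟩ | ⟨m, rfl⟩
  · exact (hq.1 ⟨m, by omega⟩ ⟨m + 1, by omega⟩ rfl).ne
      (hpal _ _ (by simp only; omega) (by simp only; omega))
  · exact hq.2 ⟨m, by omega⟩ ⟨m + 2, by omega⟩ rfl
      (hpal _ _ (by simp only; omega) (by simp only; omega))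

lemma LinkGraph.adj_of_isNBWalk {s : ℕ} {L R : Link G s} {q : Fin (s + 2) → V}
    (hq : IsNBWalk G (s + 1) q) (hL : L.1 = {initWalk q, revWalk (initWalk q)})
    (hR : R.1 = {tailWalk q, revWalk (tailWalk q)}) : (LinkGraph G s).Adj L R := by
  refine ⟨fun hLR => ?_, q, hq, Or.inl ⟨hL, hR⟩⟩
  rw [hLR, hR] at hL
  rcases eq_or_eq_revWalk_of_pair_eq hL.symm with h | h
  · exact initWalk_ne_tailWalk hq h
  · exact initWalk_ne_revWalk_tailWalk hq h

lemma midLink_val {k : ℕ} (L : Link G (k + 2)) {w : Fin (k + 3) → V}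
    (hL : L.1 = {w, revWalk w}) : (midLink G k L).1 = {midWalk w, revWalk (midWalk w)} := by
  rcases eq_or_eq_revWalk_of_pair_eq ((Classical.choose_spec L.2).2.symm.trans hL) with h | h
  · rw [← h]
    rfl
  · change {midWalk _, revWalk (midWalk _)} = _
    rw [h, midWalk_revWalk, revWalk_revWalk, Set.pair_comm]

lemma midLink_adj {k : ℕ} {L R : Link G (k + 2)} (h : (LinkGraph G (k + 2)).Adj L R) :
    (LinkGraph G k).Adj (midLink G k L) (midLink G k R) := by
  have key : ∀ {L R : Link G (k + 2)} {q : Fin (k + 4) → V}, IsNBWalk G (k + 3) q →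
      L.1 = {initWalk q, revWalk (initWalk q)} → R.1 = {tailWalk q, revWalk (tailWalk q)} →
      (LinkGraph G k).Adj (midLink G k L) (midLink G k R) := fun hq hL hR =>
    LinkGraph.adj_of_isNBWalk (midWalk_isNB hq)
      (by rw [midLink_val _ hL, midWalk_initWalk]) (by rw [midLink_val _ hR, midWalk_tailWalk])
  obtain ⟨-, q, hq, ⟨hL, hR⟩ | ⟨hR, hL⟩⟩ := h
  · exact key hq hL hR
  · exact (key hq hR hL).symm

noncomputable def midLinkHom (G : SimpleGraph V) (k : ℕ) : LinkGraph G (k + 2) →g LinkGraph G k :=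
  ⟨midLink G k, midLink_adj⟩

end

/-- For `ℓ = k + 2 ≥ 2`, the map sending each `ℓ`-link to its middle
`(ℓ-2)`-link is a graph homomorphism `L_ℓ(G) → L_{ℓ-2}(G)`; consequently
`χ(L_ℓ(G)) ≤ χ(L_{ℓ-2}(G))`. -/
theorem stmt_16 {V : Type*} (G : SimpleGraph V) (k : ℕ) :
    (∀ L R : Link G (k + 2), (LinkGraph G (k + 2)).Adj L R →
      (LinkGraph G k).Adj (midLink G k L) (midLink G k R)) ∧
    (LinkGraph G (k + 2)).chromaticNumber ≤ (LinkGraph G k).chromaticNumber :=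
  ⟨fun _ _ => midLink_adj, SimpleGraph.chromaticNumber_mono_of_hom (midLinkHom G k)⟩
end
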